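/- Let n ≥ 5 and let p(s) = s^n + α1·s^{n-1} + 2·s^{n-2} + α3·s^{n-3} + s^{n-4} + α5·s^{n-5} + ... + αn be a monic real polynomial whose coefficient of s^{n-2} equals 2 and whose coefficient of s^{n-4} equals 1, with the convention αk = 0 for k > n. If α7 - α1·α6 ≥ 0, then p is Hurwitz unstable, i.e., p has a complex root with nonnegative real part. -/

import Mathlib

/-!
Every real root of a Hurwitz-stable polynomial is negative and every non-real root has negative
real part, so a stable monic `p` factors into `X + d` and `X² + bX + c` with `b, c, d > 0`.
In the reversed coefficients `1 + α₁X + α₂X² + ⋯` each such factor preserves positivity of the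
`αₖ` and the inequalities `α₂ⱼ₊₁ < α₁α₂ⱼ` (for `2 ≤ 2j ≤ deg p`); for `n ≥ 6` the case `j = 3`
contradicts `α₇ - α₁α₆ ≥ 0`. For `n = 5` the odd part `s⁵ + 2s³ + s = s(s² + 1)²` vanishes to
second order at `s = i`, so `p(i)` is real and `p'(i)` imaginary, while for a stable `p` the real
part of `p'(i)/p(i) = ∑ 1/(i - r)` is positive.
-/

open Polynomial

namespace Polynomial

def IsHurwitzStable (p : ℝ[X]) : Prop :=
  ∀ z : ℂ, aeval z p = 0 → z.re < 0

section Factors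

variable {S : Type*} [CommSemiring S]

theorem reverse_X_add_C [Nontrivial S] (d : S) : (X + C d).reverse = 1 + C d * X := by
  have h := reverse_mul_X (C (1 : S))
  rw [reverse_C, map_one, one_mul] at h
  simp [h]

theorem reverse_X_sq_add_C_mul_X_add_C [Nontrivial S] (b c : S) :
    (X ^ 2 + C b * X + C c).reverse = 1 + C b * X + C c * X ^ 2 := by
  have h2 : (X ^ 2 + C b * X).natDegree = 2 := by compute_degree!
  rw [reverse_add_C, h2, show (X ^ 2 + C b * X : S[X]) = X * (X + C b) by ring, reverse_X_mul,
    reverse_X_add_C]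

theorem monic_X_sq_add_C_mul_X_add_C (b c : S) : (X ^ 2 + C b * X + C c).Monic := by
  monicity!

theorem natDegree_X_sq_add_C_mul_X_add_C [Nontrivial S] (b c : S) :
    (X ^ 2 + C b * X + C c).natDegree = 2 := by
  compute_degree!

end Factors

namespace IsHurwitzStable

variable {p q : ℝ[X]}

theorem of_mul_right (h : IsHurwitzStable (p * q)) : IsHurwitzStable q :=
  fun z hz ↦ h z (by rw [map_mul, hz, mul_zero])

theorem exists_positive_factor (h : IsHurwitzStable p) (hp : 0 < p.natDegree) :
    (∃ (d : ℝ) (q : ℝ[X]), 0 < d ∧ p = (X + C d) * q) ∨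
      ∃ (b c : ℝ) (q : ℝ[X]), 0 < b ∧ 0 < c ∧ p = (X ^ 2 + C b * X + C c) * q := by
  obtain ⟨z, hz⟩ := IsAlgClosed.exists_aeval_eq_zero ℂ p (natDegree_pos_iff_degree_pos.mp hp).ne'
  have hre := h z hz
  by_cases him : z.im = 0
  · have hroot : p.IsRoot z.re := by
      have hz' : (z.re : ℂ) = z := Complex.ext rfl (by simp [him])
      have : algebraMap ℝ ℂ (p.eval z.re) = 0 := by
        rw [← aeval_algebraMap_apply_eq_algebraMap_eval, Complex.coe_algebraMap, hz', hz]
      exact (FaithfulSMul.algebraMap_eq_zero_iff ℝ ℂ).mp this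
    obtain ⟨q, hq⟩ := dvd_iff_isRoot.mpr hroot
    exact .inl ⟨-z.re, q, by linarith, by rw [hq, map_neg, sub_eq_add_neg]⟩
  · obtain ⟨q, hq⟩ := p.quadratic_dvd_of_aeval_eq_zero_im_ne_zero hz him
    have hz0 : z ≠ 0 := fun h0 ↦ by simp [h0] at him
    refine .inr ⟨-(2 * z.re), ‖z‖ ^ 2, q, by linarith, by positivity, ?_⟩
    rw [hq, map_neg, neg_mul, ← sub_eq_add_neg]

theorem induction_on {motive : ℝ[X] → Prop} (one : motive 1)
    (linear : ∀ (d : ℝ) (q : ℝ[X]), 0 < d → q.Monic → motive q → motive ((X + C d) * q))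
    (quadratic : ∀ (b c : ℝ) (q : ℝ[X]), 0 < b → 0 < c → q.Monic → motive q →
      motive ((X ^ 2 + C b * X + C c) * q))
    (hmonic : p.Monic) (h : IsHurwitzStable p) : motive p := by
  induction hdeg : p.natDegree using Nat.strong_induction_on generalizing p with
  | _ m ih =>
  rcases Nat.eq_zero_or_pos m with rfl | hm
  · rwa [(Monic.natDegree_eq_zero hmonic).mp hdeg]
  rcases exists_positive_factor h (hdeg ▸ hm) with ⟨d, q, hd, rfl⟩ | ⟨b, c, q, hb, hc, rfl⟩
  · have hf := monic_X_add_C d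
    have hq := hf.of_mul_monic_left hmonic
    refine linear d q hd hq (ih q.natDegree ?_ hq (of_mul_right h) rfl)
    rw [← hdeg, hf.natDegree_mul hq, natDegree_X_add_C]
    omega
  · have hf := monic_X_sq_add_C_mul_X_add_C b c
    have hq := hf.of_mul_monic_left hmonic
    refine quadratic b c q hb hc hq (ih q.natDegree ?_ hq (of_mul_right h) rfl)
    rw [← hdeg, hf.natDegree_mul hq, natDegree_X_sq_add_C_mul_X_add_C]
    omega

end IsHurwitzStable

/-- Intended for `R = p.reverse = 1 + α₁X + ⋯ + αₘXᵐ` with `p` monic of degree `m`, so that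
`R.coeff k = αₖ`. -/
structure HurwitzCoeffs (R : ℝ[X]) (m : ℕ) : Prop where
  coeff_zero : R.coeff 0 = 1
  coeff_pos : ∀ k ≤ m, 0 < R.coeff k
  coeff_eq_zero : ∀ k, m < k → R.coeff k = 0
  coeff_odd_lt : ∀ j, 2 * j + 2 ≤ m → R.coeff (2 * j + 3) < R.coeff 1 * R.coeff (2 * j + 2)

namespace HurwitzCoeffs

variable {R : ℝ[X]} {m : ℕ} {b c d : ℝ}

theorem coeff_nonneg (h : HurwitzCoeffs R m) (k : ℕ) : 0 ≤ R.coeff k := by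
  rcases le_or_gt k m with hk | hk
  · exact (h.coeff_pos k hk).le
  · exact (h.coeff_eq_zero k hk).ge

theorem coeff_odd_le (h : HurwitzCoeffs R m) (j : ℕ) :
    R.coeff (2 * j + 1) ≤ R.coeff 1 * R.coeff (2 * j) := by
  rcases j with _ | j
  · simp [h.coeff_zero]
  rcases le_or_gt (2 * j + 2) m with hj | hj
  · exact (h.coeff_odd_lt j hj).le
  · rw [h.coeff_eq_zero (2 * (j + 1) + 1) (by omega)]
    exact mul_nonneg (h.coeff_nonneg 1) (h.coeff_nonneg _)

theorem one : HurwitzCoeffs 1 0 where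
  coeff_zero := coeff_one_zero
  coeff_pos k hk := by simp [Nat.le_zero.mp hk]
  coeff_eq_zero k hk := by simp [coeff_one, hk.ne']
  coeff_odd_lt j hj := by omega

theorem mul_linear (h : HurwitzCoeffs R m) (hd : 0 < d) :
    HurwitzCoeffs ((1 + C d * X) * R) (m + 1) := by
  have h₀ : ((1 + C d * X) * R).coeff 0 = R.coeff 0 := by simp [add_mul, mul_assoc]
  have hsucc (k : ℕ) : ((1 + C d * X) * R).coeff (k + 1) = R.coeff (k + 1) + d * R.coeff k := by
    simp [add_mul, mul_assoc, coeff_X_mul]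
  refine ⟨h₀.trans h.coeff_zero, fun k hk ↦ ?_, fun k hk ↦ ?_, fun j hj ↦ ?_⟩
  · rcases k with _ | k
    · simp [h₀, h.coeff_zero]
    · rw [hsucc]
      exact add_pos_of_nonneg_of_pos (h.coeff_nonneg _) (mul_pos hd (h.coeff_pos k (by omega)))
  · obtain _ | k := k
    · omega
    rw [hsucc, h.coeff_eq_zero _ (by omega), h.coeff_eq_zero _ (by omega), mul_zero, add_zero]
  · have e₁ := hsucc 0
    have e₂ := hsucc (2 * j + 1)
    have e₃ := hsucc (2 * j + 2)
    simp only [Nat.add_assoc, Nat.reduceAdd, zero_add, h.coeff_zero, mul_one] at e₁ e₂ e₃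
    rw [e₁, e₂, e₃]
    -- `α₁'α₂ⱼ₊₂' - α₂ⱼ₊₃' = (α₁α₂ⱼ₊₂ - α₂ⱼ₊₃) + d α₁ α₂ⱼ₊₁ + d² α₂ⱼ₊₁`
    have hodd := h.coeff_odd_le (j + 1)
    have hpos :=
      mul_pos hd (mul_pos (h.coeff_pos 1 (by omega)) (h.coeff_pos (2 * j + 1) (by omega)))
    have hsq := mul_nonneg (sq_nonneg d) (h.coeff_nonneg (2 * j + 1))
    linear_combination hodd + hpos + hsq

theorem mul_quadratic (h : HurwitzCoeffs R m) (hb : 0 < b) (hc : 0 < c) :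
    HurwitzCoeffs ((1 + C b * X + C c * X ^ 2) * R) (m + 2) := by
  have h₀ : ((1 + C b * X + C c * X ^ 2) * R).coeff 0 = R.coeff 0 := by simp [add_mul, mul_assoc]
  have h₁ : ((1 + C b * X + C c * X ^ 2) * R).coeff 1 = R.coeff 1 + b * R.coeff 0 := by
    simp [add_mul, mul_assoc, coeff_X_mul, coeff_X_pow_mul']
  have hadd (k : ℕ) : ((1 + C b * X + C c * X ^ 2) * R).coeff (k + 2) =
      R.coeff (k + 2) + b * R.coeff (k + 1) + c * R.coeff k := by
    simp [add_mul, mul_assoc, coeff_X_mul, coeff_X_pow_mul']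
  refine ⟨h₀.trans h.coeff_zero, fun k hk ↦ ?_, fun k hk ↦ ?_, fun j hj ↦ ?_⟩
  · rcases k with _ | _ | k
    · simp [h₀, h.coeff_zero]
    · rw [h₁, h.coeff_zero, mul_one]
      exact add_pos_of_nonneg_of_pos (h.coeff_nonneg 1) hb
    · rw [hadd]
      exact add_pos_of_nonneg_of_pos
        (add_nonneg (h.coeff_nonneg _) (mul_nonneg hb.le (h.coeff_nonneg _)))
        (mul_pos hc (h.coeff_pos k (by omega)))
  · obtain _ | _ | k := k
    · omega
    · omega
    rw [hadd, h.coeff_eq_zero _ (by omega), h.coeff_eq_zero _ (by omega),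
      h.coeff_eq_zero _ (by omega)]
    ring
  · have e₂ := hadd (2 * j)
    have e₃ := hadd (2 * j + 1)
    simp only [Nat.add_assoc, Nat.reduceAdd] at e₂ e₃
    rw [h₁, e₂, e₃, h.coeff_zero, mul_one]
    -- `α₁'α₂ⱼ₊₂' - α₂ⱼ₊₃' = (α₁α₂ⱼ₊₂ - α₂ⱼ₊₃) + c (α₁α₂ⱼ - α₂ⱼ₊₁)`
    -- `+ b α₁ α₂ⱼ₊₁ + b² α₂ⱼ₊₁ + b c α₂ⱼ`
    have hodd := h.coeff_odd_le (j + 1)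
    have hodd' := mul_le_mul_of_nonneg_left (h.coeff_odd_le j) hc.le
    have hpos := mul_pos (mul_pos hb hc) (h.coeff_pos (2 * j) (by omega))
    have hmid := mul_nonneg hb.le (mul_nonneg (h.coeff_nonneg 1) (h.coeff_nonneg (2 * j + 1)))
    have hsq := mul_nonneg (sq_nonneg b) (h.coeff_nonneg (2 * j + 1))
    linear_combination hodd + hodd' + hpos + hmid + hsq

end HurwitzCoeffs

namespace IsHurwitzStable

variable {p : ℝ[X]}

theorem hurwitzCoeffs_reverse (hmonic : p.Monic) (h : IsHurwitzStable p) :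
    HurwitzCoeffs p.reverse p.natDegree := by
  refine induction_on (motive := fun p ↦ HurwitzCoeffs p.reverse p.natDegree) ?_
    (fun d q hd hq ih ↦ ?_) (fun b c q hb hc hq ih ↦ ?_) hmonic h
  · have h1 : (1 : ℝ[X]).reverse = 1 := by simpa using reverse_C (1 : ℝ)
    rw [h1, natDegree_one]
    exact HurwitzCoeffs.one
  · rw [reverse_mul_of_domain, reverse_X_add_C, (monic_X_add_C d).natDegree_mul hq,
      natDegree_X_add_C, Nat.add_comm 1]
    exact ih.mul_linear hd
  · rw [reverse_mul_of_domain, reverse_X_sq_add_C_mul_X_add_C,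
      (monic_X_sq_add_C_mul_X_add_C b c).natDegree_mul hq, natDegree_X_sq_add_C_mul_X_add_C,
      Nat.add_comm 2]
    exact ih.mul_quadratic hb hc

theorem re_eval_derivative_div_eval_pos (h : IsHurwitzStable p) (hp : 0 < p.natDegree) {z : ℂ}
    (hz : 0 ≤ z.re) : 0 < (aeval z (derivative p) / aeval z p).re := by
  set f := p.map (algebraMap ℝ ℂ)
  have hf : f.Splits := IsAlgClosed.splits f
  have hroots : ∀ r ∈ f.roots, r.re < 0 := fun r hr ↦ h r (by
    simpa [f, eval_map_algebraMap] using isRoot_of_mem_roots hr)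
  have hfz : f.eval z ≠ 0 := by
    rw [eval_map_algebraMap]
    exact fun h0 ↦ (h z h0).not_ge hz
  rw [← eval_map_algebraMap, ← eval_map_algebraMap, ← derivative_map,
    hf.eval_derivative_div_eval_of_ne_zero hfz]
  have hterm : ∀ r ∈ f.roots, 0 < (1 / (z - r)).re := fun r hr ↦ by
    rw [one_div, Complex.inv_re]
    have hzr : 0 < (z - r).re := by rw [Complex.sub_re]; linarith [hroots r hr]
    exact div_pos hzr (Complex.normSq_pos.mpr fun h0 ↦ by simp [h0] at hzr)
  have hne : f.roots ≠ 0 := by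
    rw [← Multiset.card_pos, ← hf.natDegree_eq_card_roots, natDegree_map]
    exact hp
  have hre_sum : (f.roots.map fun r ↦ 1 / (z - r)).sum.re =
      (f.roots.map fun r ↦ (1 / (z - r)).re).sum := by
    simpa [Multiset.map_map] using
      map_multiset_sum Complex.reAddGroupHom (f.roots.map fun r ↦ 1 / (z - r))
  rw [hre_sum]
  simpa using Multiset.sum_lt_sum_of_nonempty hne hterm

end IsHurwitzStable

theorem not_isHurwitzStable_quintic (a₁ a₃ a₅ : ℝ) :
    ¬ IsHurwitzStable (X ^ 5 + C a₁ * X ^ 4 + 2 * X ^ 3 + C a₃ * X ^ 2 + X + C a₅) := by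
  set p : ℝ[X] := X ^ 5 + C a₁ * X ^ 4 + 2 * X ^ 3 + C a₃ * X ^ 2 + X + C a₅
  intro h
  have hp : aeval Complex.I p = (a₁ - a₃ + a₅ : ℝ) := by
    simp [p, pow_succ, Complex.ext_iff, map_ofNat]
    constructor <;> ring
  have hp' : aeval Complex.I (derivative p) = (2 * a₃ - 4 * a₁ : ℝ) * Complex.I := by
    simp [p, pow_succ, Complex.ext_iff, map_ofNat]
    constructor <;> ring
  have hdeg : p.natDegree = 5 := by simp only [p]; compute_degree!
  have hpos := h.re_eval_derivative_div_eval_pos (by omega) (z := Complex.I) (by simp)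
  simp [hp, hp', Complex.div_re] at hpos

section SumForm

variable {S : Type*} [Semiring S] (n : ℕ) (a : ℕ → S)

theorem degree_sum_C_mul_X_pow_lt :
    (∑ i ∈ Finset.range n, C (a (i + 1)) * X ^ (n - 1 - i)).degree < (n : WithBot ℕ) := by
  refine (degree_sum_le _ _).trans_lt
    ((Finset.sup_lt_iff (WithBot.bot_lt_coe n)).mpr fun i hi ↦ ?_)
  refine (degree_C_mul_X_pow_le _ _).trans_lt (Nat.cast_lt.mpr ?_)
  have := Finset.mem_range.mp hi
  omega

theorem monic_X_pow_add_sum :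
    (X ^ n + ∑ i ∈ Finset.range n, C (a (i + 1)) * X ^ (n - 1 - i)).Monic :=
  monic_X_pow_add (degree_sum_C_mul_X_pow_lt n a)

theorem natDegree_X_pow_add_sum [Nontrivial S] :
    (X ^ n + ∑ i ∈ Finset.range n, C (a (i + 1)) * X ^ (n - 1 - i)).natDegree = n := by
  rw [natDegree_add_eq_left_of_degree_lt, natDegree_X_pow]
  rw [degree_X_pow]
  exact degree_sum_C_mul_X_pow_lt n a

theorem coeff_X_pow_add_sum {k : ℕ} (hk : 1 ≤ k) (hkn : k ≤ n) :
    (X ^ n + ∑ i ∈ Finset.range n, C (a (i + 1)) * X ^ (n - 1 - i)).coeff (n - k) = a k := by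
  rw [coeff_add, coeff_X_pow, if_neg (by omega), zero_add, finsetSum_coeff,
    Finset.sum_eq_single (k - 1)]
  · rw [coeff_C_mul_X_pow, if_pos (by omega), Nat.sub_add_cancel hk]
  · intro i hi hik
    rw [coeff_C_mul_X_pow, if_neg (by have := Finset.mem_range.mp hi; omega)]
  · intro hk'
    exact absurd (Finset.mem_range.mpr (by omega)) hk'

theorem coeff_reverse_X_pow_add_sum [Nontrivial S] (ha : ∀ k, n < k → a k = 0) {k : ℕ}
    (hk : 1 ≤ k) :
    (X ^ n + ∑ i ∈ Finset.range n, C (a (i + 1)) * X ^ (n - 1 - i)).reverse.coeff k = a k := by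
  rcases le_or_gt k n with hkn | hkn
  · rw [coeff_reverse, natDegree_X_pow_add_sum, revAt_le hkn, coeff_X_pow_add_sum n a hk hkn]
  · rw [ha k hkn]
    refine coeff_eq_zero_of_natDegree_lt ((reverse_natDegree_le _).trans_lt ?_)
    rwa [natDegree_X_pow_add_sum]

end SumForm

end Polynomial

theorem unstable_special_coeffs (n : ℕ) (hn : 5 ≤ n) (α : ℕ → ℝ)
    (hα2 : α 2 = 2) (hα4 : α 4 = 1)
    (hconv : ∀ k, n < k → α k = 0)
    (h7 : 0 ≤ α 7 - α 1 * α 6) :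
    ∃ z : ℂ, aeval z (X ^ n + ∑ i ∈ Finset.range n, C (α (i + 1)) * X ^ (n - 1 - i)) = 0
      ∧ 0 ≤ z.re := by
  set p := X ^ n + ∑ i ∈ Finset.range n, C (α (i + 1)) * X ^ (n - 1 - i)
  by_contra! hstable
  obtain rfl | hn6 : n = 5 ∨ 6 ≤ n := by omega
  · have hp : p = X ^ 5 + C (α 1) * X ^ 4 + 2 * X ^ 3 + C (α 3) * X ^ 2 + X + C (α 5) := by
      simp [p, Finset.sum_range_succ, hα2, hα4, C_ofNat]
      ring
    exact not_isHurwitzStable_quintic (α 1) (α 3) (α 5) (hp ▸ hstable)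
  · have hcoeffs := IsHurwitzStable.hurwitzCoeffs_reverse (monic_X_pow_add_sum n α) hstable
    have hα₇ := hcoeffs.coeff_odd_lt 2 (by rw [natDegree_X_pow_add_sum]; omega)
    simp only [coeff_reverse_X_pow_add_sum n α hconv (by norm_num : 1 ≤ 7),
      coeff_reverse_X_pow_add_sum n α hconv le_rfl,
      coeff_reverse_X_pow_add_sum n α hconv (by norm_num : 1 ≤ 6)] at hα₇
    linarith
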